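/- Let f : ℂ → ℂ be continuous on an open set U ⊆ ℂ and complex differentiable at every point of U \ X, where X ⊆ U is a compact countable set with exactly one accumulation point w, and w ∈ X. If △(z₁, z₂, z₃) is a triangle contained in U and w lies on the edge of the triangle joining z₁ and z₂ (i.e., w belongs to the segment [z₁, z₂]), then the integral of f along the closed polygonal path [z₁, z₂, z₃, z₁] equals 0. -/

import Mathlib

open Set

/-- The complex line integral of `f` along the segment from `a` to `b`:
`∫_{t ∈ [0,1]} f((1-t)·a + t·b) · (b - a) dt`. -/
noncomputable def segmentIntegral (f : ℂ → ℂ) (a b : ℂ) : ℂ :=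
  ∫ t in (0:ℝ)..1, f ((1 - t) • a + t • b) * (b - a)

/-- The integral of `f` along the closed polygonal path `[z₁, z₂, z₃, z₁]`. -/
noncomputable def triangleIntegral (f : ℂ → ℂ) (z₁ z₂ z₃ : ℂ) : ℂ :=
  segmentIntegral f z₁ z₂ + segmentIntegral f z₂ z₃ + segmentIntegral f z₃ z₁

/-- `w` is an accumulation point of `X`: every neighborhood of `w` contains a
point of `X` other than `w`. -/
def IsAccumulationPoint (w : ℂ) (X : Set ℂ) : Prop :=
  ∀ V ∈ nhds w, ∃ x, x ∈ V ∩ X ∧ x ≠ w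

/-! Countably many points are removable for a continuous function: on every disc inside `U`,
Cauchy's integral formula with countably many exceptional points makes `f` analytic, so `f` is
holomorphic on `U`. On the convex triangle it then has a primitive `g`, and the three edge
integrals `g z₂ - g z₁`, `g z₃ - g z₂`, `g z₁ - g z₃` cancel. -/

theorem Complex.differentiableOn_of_differentiable_off_countable {E : Type*}
    [NormedAddCommGroup E] [NormedSpace ℂ E] [CompleteSpace E] {f : ℂ → E} {U s : Set ℂ}
    (hU : IsOpen U) (hs : s.Countable) (hf : ContinuousOn f U)
    (hd : ∀ z ∈ U \ s, DifferentiableAt ℂ f z) : DifferentiableOn ℂ f U := by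
  intro z hz
  obtain ⟨R, hR, hRU⟩ := Metric.nhds_basis_closedBall.mem_iff.1 (hU.mem_nhds hz)
  lift R to NNReal using hR.le
  have hseries := hasFPowerSeriesOnBall_of_differentiable_off_countable hs (hf.mono hRU)
    (fun y hy => hd y ⟨hRU (Metric.ball_subset_closedBall hy.1), hy.2⟩) hR
  exact hseries.analyticAt.differentiableAt.differentiableWithinAt

theorem segmentIntegral_eq_sub_of_hasDerivWithinAt {f g : ℂ → ℂ} {s : Set ℂ}
    (hs : Convex ℝ s) (hg : ∀ z ∈ s, HasDerivWithinAt g (f z) s z) (hf : ContinuousOn f s)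
    {a b : ℂ} (ha : a ∈ s) (hb : b ∈ s) : segmentIntegral f a b = g b - g a := by
  set γ : ℝ → ℂ := fun t => (1 - t) • a + t • b
  have hγs : MapsTo γ (Icc 0 1) s := fun t ht => hs ha hb (by linarith [ht.2]) ht.1 (by ring)
  have hγ : ∀ t, HasDerivAt γ (b - a) t := fun t =>
    ((((hasDerivAt_id t).const_sub 1).smul_const a).add
      ((hasDerivAt_id t).smul_const b)).congr_deriv (by simp only [neg_smul, one_smul]; abel)
  have hgγ : ∀ t ∈ Icc (0:ℝ) 1,
      HasDerivWithinAt (g ∘ γ) (f (γ t) * (b - a)) (Icc 0 1) t :=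
    fun t ht => (hg _ (hγs ht)).comp t (hγ t).hasDerivWithinAt hγs
  have hγcont : Continuous γ := continuous_iff_continuousAt.2 fun t => (hγ t).continuousAt
  have hint : IntervalIntegrable (fun t => f (γ t) * (b - a)) MeasureTheory.volume 0 1 :=
    ((hf.comp hγcont.continuousOn hγs).mul continuousOn_const).intervalIntegrable_of_Icc
      zero_le_one
  have hftc := intervalIntegral.integral_eq_sub_of_hasDerivAt_of_le zero_le_one
    (fun t ht => (hgγ t ht).continuousWithinAt)
    (fun t ht => (hgγ t (Ioo_subset_Icc_self ht)).hasDerivAt (Icc_mem_nhds ht.1 ht.2)) hint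
  rw [segmentIntegral, hftc]
  simp [γ]

theorem triangleIntegral_eq_zero_of_differentiableOn {f : ℂ → ℂ} {a b c : ℂ}
    (hf : DifferentiableOn ℂ f (convexHull ℝ {a, b, c})) : triangleIntegral f a b c = 0 := by
  have hT : Convex ℝ (convexHull ℝ {a, b, c}) := convex_convexHull ℝ _
  obtain ⟨g, hg⟩ := hT.exists_forall_hasDerivWithinAt hf
  have hseg : ∀ {z z'}, z ∈ ({a, b, c} : Set ℂ) → z' ∈ ({a, b, c} : Set ℂ) →
      segmentIntegral f z z' = g z' - g z := fun hz hz' =>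
    segmentIntegral_eq_sub_of_hasDerivWithinAt hT hg hf.continuousOn
      (subset_convexHull ℝ _ hz) (subset_convexHull ℝ _ hz')
  rw [triangleIntegral, hseg (by simp) (by simp), hseg (by simp) (by simp),
    hseg (by simp) (by simp)]
  ring

theorem stmt_6_general (f : ℂ → ℂ) (U : Set ℂ) (hU : IsOpen U)
    (hf : ContinuousOn f U) (X : Set ℂ)
    (hXcount : X.Countable)
    (z₁ z₂ z₃ : ℂ) (htri : convexHull ℝ {z₁, z₂, z₃} ⊆ U)
    (hd : ∀ z ∈ U \ X, DifferentiableAt ℂ f z) :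
    triangleIntegral f z₁ z₂ z₃ = 0 :=
  triangleIntegral_eq_zero_of_differentiableOn
    ((Complex.differentiableOn_of_differentiable_off_countable hU hXcount hf hd).mono htri)

theorem stmt_6 (f : ℂ → ℂ) (U : Set ℂ) (hU : IsOpen U)
    (hf : ContinuousOn f U) (X : Set ℂ) (hXU : X ⊆ U)
    (hXcomp : IsCompact X) (hXcount : X.Countable)
    (w : ℂ) (hacc : {p | IsAccumulationPoint p X} = {w}) (hwX : w ∈ X)
    (z₁ z₂ z₃ : ℂ) (htri : convexHull ℝ {z₁, z₂, z₃} ⊆ U)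
    (hd : ∀ z ∈ U \ X, DifferentiableAt ℂ f z)
    (hedge : w ∈ convexHull ℝ {z₁, z₂}) :
    triangleIntegral f z₁ z₂ z₃ = 0 :=
  stmt_6_general f U hU hf X hXcount z₁ z₂ z₃ htri hd
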